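/- arXiv:2209.03120 — 6 statements merged into one kernel-verified Lean document; each statement's English description precedes it below -/
import Mathlib

section
/- For integers k ≥ 2 and n ≥ k + 2, the signless Laplacian spectral radius of S_{n,k} equals (n + 2k - 2 + sqrt((n + 2k - 2)^2 - 8(k^2 - k)))/2. -/
open SimpleGraph Finset
open scoped Matrix

/-- The signless Laplacian matrix `Q(G) = D(G) + A(G)` over `ℝ`. -/
def signlessLaplacian {V : Type*} [Fintype V] [DecidableEq V] (G : SimpleGraph V)
    [DecidableRel G.Adj] : Matrix V V ℝ :=
  SimpleGraph.degMatrix ℝ G + G.adjMatrix ℝ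

/-- `q` is the largest eigenvalue of the real matrix `M`. -/
def IsMaxEigenvalue {V : Type*} [Fintype V] [DecidableEq V] (M : Matrix V V ℝ) (q : ℝ) : Prop :=
  Module.End.HasEigenvalue (Matrix.toLin' M) q ∧
    ∀ μ : ℝ, Module.End.HasEigenvalue (Matrix.toLin' M) μ → μ ≤ q

/-- `S_{n,k}`: the join of `K_k` with an empty graph on `n - k` vertices. -/
def Snk (n k : ℕ) : SimpleGraph (Fin n) where
  Adj u v := u ≠ v ∧ (u.val < k ∨ v.val < k)
  symm := ⟨fun u v ⟨h1, h2⟩ => ⟨h1.symm, h2.symm⟩⟩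
  loopless := ⟨fun u ⟨h, _⟩ => h rfl⟩

instance (n k : ℕ) : DecidableRel (Snk n k).Adj := fun u v =>
  inferInstanceAs (Decidable (u ≠ v ∧ (u.val < k ∨ v.val < k)))

/-- `S_{n,k}^+`: `S_{n,k}` plus one edge inside the independent set (between
vertices `k` and `k+1`). -/
def SnkPlus (n k : ℕ) : SimpleGraph (Fin n) where
  Adj u v := u ≠ v ∧ (u.val < k ∨ v.val < k ∨ (u.val ≤ k + 1 ∧ v.val ≤ k + 1))
  symm := ⟨fun u v ⟨h1, h2⟩ => ⟨h1.symm, by tauto⟩⟩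
  loopless := ⟨fun u ⟨h, _⟩ => h rfl⟩

instance (n k : ℕ) : DecidableRel (SnkPlus n k).Adj := fun u v =>
  inferInstanceAs (Decidable (u ≠ v ∧ (u.val < k ∨ v.val < k ∨ (u.val ≤ k + 1 ∧ v.val ≤ k + 1))))

/-- `T` is contained in `G` as a subgraph: there is an injective graph homomorphism. -/
def ContainsSub {α β : Type*} (T : SimpleGraph α) (G : SimpleGraph β) : Prop :=
  ∃ f : T →g G, Function.Injective f

lemma nbr_lt {n k : ℕ} (v : Fin n) (hv : v.val < k) :
    (Snk n k).neighborFinset v = univ.erase v := by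
  ext u
  simp only [mem_neighborFinset, mem_erase, mem_univ, and_true]
  constructor
  · rintro ⟨h1, _⟩; exact fun h => h1 h.symm
  · intro h; exact ⟨fun h' => h h'.symm, Or.inl hv⟩

lemma nbr_ge {n k : ℕ} (v : Fin n) (hv : ¬ v.val < k) :
    (Snk n k).neighborFinset v = univ.filter (fun u : Fin n => u.val < k) := by
  ext u
  simp only [mem_neighborFinset, mem_filter, mem_univ, true_and]
  constructor
  · rintro ⟨h1, h2 | h2⟩
    · exact absurd h2 hv
    · exact h2
  · intro h
    refine ⟨fun h' => hv ?_, Or.inr h⟩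
    rw [h']; exact h

lemma card_filter_lt {n k : ℕ} (hkn : k ≤ n) :
    (univ.filter (fun u : Fin n => u.val < k)).card = k := by
  have h := Finset.card_bij (t := (univ : Finset (Fin k)))
    (fun (u : Fin n) hu => Fin.mk (Fin.val u) (mem_filter.mp hu).2)
    (fun a ha => mem_univ _)
    (fun a ha b hb h => by simpa [Fin.ext_iff] using congrArg Fin.val h)
    (fun b _ => ⟨⟨b.val, lt_of_lt_of_le b.isLt hkn⟩, mem_filter.mpr ⟨mem_univ _, b.isLt⟩, rfl⟩)
  simpa using h

lemma card_filter_ge {n k : ℕ} (hkn : k ≤ n) :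
    (univ.filter (fun u : Fin n => ¬ u.val < k)).card = n - k := by
  have h := Finset.card_filter_add_card_filter_not
    (s := (univ : Finset (Fin n))) (p := fun u : Fin n => u.val < k)
  rw [card_filter_lt hkn, Finset.card_univ, Fintype.card_fin] at h
  omega

lemma slap_mulVec_apply {n k : ℕ} (hkn : k ≤ n) (hn1 : 1 ≤ n) (x : Fin n → ℝ) (v : Fin n) :
    (signlessLaplacian (Snk n k) *ᵥ x) v =
      if v.val < k then ((n : ℝ) - 1) * x v + ((∑ u, x u) - x v)
      else (k : ℝ) * x v + ∑ u ∈ univ.filter (fun u : Fin n => u.val < k), x u := by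
  have hbase : (signlessLaplacian (Snk n k) *ᵥ x) v =
      ((Snk n k).degree v : ℝ) * x v + ∑ u ∈ (Snk n k).neighborFinset v, x u := by
    simp [signlessLaplacian, Matrix.add_mulVec, degMatrix_mulVec_apply, adjMatrix_mulVec_apply]
  by_cases hv : v.val < k
  · rw [hbase, if_pos hv]
    have hd : (Snk n k).degree v = n - 1 := by
      rw [← card_neighborFinset_eq_degree, nbr_lt v hv,
        Finset.card_erase_of_mem (mem_univ v), Finset.card_univ, Fintype.card_fin]
    have hsum : ∑ u ∈ (Snk n k).neighborFinset v, x u = (∑ u, x u) - x v := by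
      rw [nbr_lt v hv, Finset.sum_erase_eq_sub (mem_univ v)]
    rw [hd, hsum, Nat.cast_sub hn1, Nat.cast_one]
  · rw [hbase, if_neg hv]
    have hd : (Snk n k).degree v = k := by
      rw [← card_neighborFinset_eq_degree, nbr_ge v hv, card_filter_lt hkn]
    rw [hd, nbr_ge v hv]

set_option maxHeartbeats 1000000 in
theorem stmt_0 (k n : ℕ) (hk : 2 ≤ k) (hn : k + 2 ≤ n) (q : ℝ)
    (hq : IsMaxEigenvalue (signlessLaplacian (Snk n k)) q) :
    q = ((n : ℝ) + 2 * k - 2 +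
      Real.sqrt (((n : ℝ) + 2 * k - 2) ^ 2 - 8 * ((k : ℝ) ^ 2 - k))) / 2 := by
  have hkn : k ≤ n := by omega
  have hn1 : 1 ≤ n := by omega
  have hkR : (2 : ℝ) ≤ (k : ℝ) := by exact_mod_cast hk
  have hnR : (k : ℝ) + 2 ≤ (n : ℝ) := by exact_mod_cast hn
  set p : ℝ := (n : ℝ) + 2 * k - 2 with hp
  set D : ℝ := p ^ 2 - 8 * ((k : ℝ) ^ 2 - k) with hDdef
  have hDge : ((n : ℝ) - 2 * k - 2) ^ 2 ≤ D := by
    rw [hDdef, hp]; nlinarith [hkR, hnR]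
  have hD : 0 ≤ D := le_trans (sq_nonneg _) hDge
  set s : ℝ := Real.sqrt D with hs
  have hs2 : s ^ 2 = D := Real.sq_sqrt hD
  set lam : ℝ := (p + s) / 2 with hlam
  have hroot : lam ^ 2 - p * lam + 2 * ((k : ℝ) ^ 2 - k) = 0 := by
    rw [hlam]; nlinarith [hs2]
  -- lam ≥ n - 2 ≥ k
  have hslb : (n : ℝ) - 2 * k - 2 ≤ s := by
    calc (n : ℝ) - 2 * k - 2 ≤ |(n : ℝ) - 2 * k - 2| := le_abs_self _
    _ = Real.sqrt (((n : ℝ) - 2 * k - 2) ^ 2) := (Real.sqrt_sq_eq_abs _).symm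
    _ ≤ s := Real.sqrt_le_sqrt hDge
  have hlam_n2 : (n : ℝ) - 2 ≤ lam := by rw [hlam]; linarith
  have hlam_k : (k : ℝ) ≤ lam := by linarith
  -- quadratic root implies ≤ lam
  have hroot_le : ∀ μ : ℝ, μ ^ 2 - p * μ + 2 * ((k : ℝ) ^ 2 - k) = 0 → μ ≤ lam := by
    intro μ hμ
    have h1 : (2 * μ - p) ^ 2 = D := by rw [hDdef]; nlinarith
    have h2 : 2 * μ - p ≤ s := by
      calc 2 * μ - p ≤ |2 * μ - p| := le_abs_self _
      _ = Real.sqrt ((2 * μ - p) ^ 2) := (Real.sqrt_sq_eq_abs _).symm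
      _ = s := by rw [h1]
    rw [hlam]; linarith
  -- characterization of eigen-equations
  have key : ∀ μ : ℝ, ∀ x : Fin n → ℝ, x ≠ 0 →
      (signlessLaplacian (Snk n k) *ᵥ x) = μ • x → μ ≤ lam := by
    intro μ x hx0 hx
    have heq : ∀ v : Fin n,
        (if v.val < k then ((n : ℝ) - 1) * x v + ((∑ u, x u) - x v)
         else (k : ℝ) * x v + ∑ u ∈ univ.filter (fun u : Fin n => u.val < k), x u) = μ * x v := by
      intro v
      rw [← slap_mulVec_apply hkn hn1 x v, hx]; rfl
    set sC : ℝ := ∑ u ∈ univ.filter (fun u : Fin n => u.val < k), x u with hsCdef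
    set sI : ℝ := ∑ u ∈ univ.filter (fun u : Fin n => ¬ u.val < k), x u with hsIdef
    have hS : ∑ u, x u = sC + sI := by
      rw [hsCdef, hsIdef, Finset.sum_filter_add_sum_filter_not]
    have hC : ∀ v : Fin n, v.val < k → (μ - ((n : ℝ) - 2)) * x v = sC + sI := by
      intro v hv
      have := heq v; rw [if_pos hv, hS] at this; linarith
    have hI : ∀ v : Fin n, ¬ v.val < k → (μ - (k : ℝ)) * x v = sC := by
      intro v hv
      have := heq v; rw [if_neg hv] at this; linarith
    -- summed equations
    have hsumC : (μ - ((n : ℝ) - 2)) * sC = (k : ℝ) * (sC + sI) := by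
      have : ∑ v ∈ univ.filter (fun u : Fin n => u.val < k), (μ - ((n : ℝ) - 2)) * x v
          = ∑ v ∈ univ.filter (fun u : Fin n => u.val < k), (sC + sI) :=
        Finset.sum_congr rfl fun v hv => hC v (mem_filter.mp hv).2
      rw [← Finset.mul_sum, Finset.sum_const, card_filter_lt hkn, nsmul_eq_mul] at this
      rw [← hsCdef] at this; exact this
    have hsumI : (μ - (k : ℝ)) * sI = ((n : ℝ) - k) * sC := by
      have : ∑ v ∈ univ.filter (fun u : Fin n => ¬ u.val < k), (μ - (k : ℝ)) * x v
          = ∑ v ∈ univ.filter (fun u : Fin n => ¬ u.val < k), sC :=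
        Finset.sum_congr rfl fun v hv => hI v (mem_filter.mp hv).2
      rw [← Finset.mul_sum, Finset.sum_const, card_filter_ge hkn, nsmul_eq_mul] at this
      rw [← hsIdef] at this
      rw [this, Nat.cast_sub hkn]
    by_cases hsC : sC = 0
    · by_cases hsI : sI = 0
      · -- x nonzero somewhere; total sum zero
        obtain ⟨v, hv⟩ := Function.ne_iff.mp hx0
        by_cases hvk : v.val < k
        · have := hC v hvk
          rw [hsC, hsI, add_zero] at this
          have hμ : μ = (n : ℝ) - 2 := by
            rcases mul_eq_zero.mp this with h | h
            · linarith
            · exact absurd h hv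
          rw [hμ]; exact hlam_n2
        · have := hI v hvk
          rw [hsC] at this
          have hμ : μ = (k : ℝ) := by
            rcases mul_eq_zero.mp this with h | h
            · linarith
            · exact absurd h hv
          rw [hμ]; exact hlam_k
      · -- sC = 0, sI ≠ 0 ⇒ μ = k
        rw [hsC, mul_comm] at hsumI
        have : μ - (k : ℝ) = 0 := by
          have h := hsumI
          rw [mul_zero] at h
          rcases mul_eq_zero.mp h with h' | h'
          · exact absurd h' hsI
          · exact h'
        have hμ : μ = (k : ℝ) := by linarith
        rw [hμ]; exact hlam_k
    · -- sC ≠ 0 ⇒ quadratic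
      have hquad : μ ^ 2 - p * μ + 2 * ((k : ℝ) ^ 2 - k) = 0 := by
        have h1 : (μ - (k : ℝ)) * ((μ - ((n : ℝ) - 2)) * sC)
            = (μ - (k : ℝ)) * ((k : ℝ) * (sC + sI)) := by rw [hsumC]
        have h2 : (μ - (k : ℝ)) * sI = ((n : ℝ) - k) * sC := hsumI
        have h3 : ((μ - (k : ℝ)) * (μ - ((n : ℝ) - 2)) - (k : ℝ) * (μ - (k : ℝ))
            - (k : ℝ) * ((n : ℝ) - k)) * sC = 0 := by linear_combination h1 + (k : ℝ) * h2
        have h4 := (mul_eq_zero.mp h3).resolve_right hsC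
        rw [hp]; nlinarith [h4]
      exact hroot_le μ hquad
  -- lam is an eigenvalue
  have hlam_eig : Module.End.HasEigenvalue (Matrix.toLin' (signlessLaplacian (Snk n k))) lam := by
    set x : Fin n → ℝ := fun v => if v.val < k then lam - k else (k : ℝ) with hxdef
    have hsC : ∑ u ∈ univ.filter (fun u : Fin n => u.val < k), x u = (k : ℝ) * (lam - k) := by
      rw [Finset.sum_congr rfl (fun u hu => if_pos (mem_filter.mp hu).2),
        Finset.sum_const, card_filter_lt hkn, nsmul_eq_mul]
    have hS : ∑ u, x u = (k : ℝ) * (lam - k) + ((n : ℝ) - k) * k := by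
      rw [← Finset.sum_filter_add_sum_filter_not univ (fun u : Fin n => u.val < k), hsC]
      congr 1
      rw [Finset.sum_congr rfl (fun u hu => if_neg (mem_filter.mp hu).2),
        Finset.sum_const, card_filter_ge hkn, nsmul_eq_mul, Nat.cast_sub hkn]
    have hx : (signlessLaplacian (Snk n k) *ᵥ x) = lam • x := by
      funext v
      rw [slap_mulVec_apply hkn hn1 x v]
      by_cases hv : v.val < k
      · rw [if_pos hv, hS]
        have hxv : x v = lam - k := if_pos hv
        have hsv : (lam • x) v = lam * (lam - k) := by
          simp only [Pi.smul_apply, smul_eq_mul, hxv]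
        rw [hxv, hsv, hp] at *
        nlinarith [hroot]
      · rw [if_neg hv, hsC]
        have hxv : x v = (k : ℝ) := if_neg hv
        have hsv : (lam • x) v = lam * k := by
          simp only [Pi.smul_apply, smul_eq_mul, hxv]
        rw [hxv, hsv]
        ring
    have hx0 : x ≠ 0 := by
      intro h
      have hkn' : k < n := by omega
      have := congrFun h ⟨k, hkn'⟩
      simp only [hxdef, Pi.zero_apply] at this
      rw [if_neg (lt_irrefl k)] at this
      have : (k : ℝ) = 0 := this
      have : (2 : ℝ) ≤ 0 := le_trans hkR (le_of_eq this)
      linarith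
    apply Module.End.hasEigenvalue_of_hasEigenvector (x := x)
    refine ⟨?_, hx0⟩
    rw [Module.End.mem_eigenspace_iff, Matrix.toLin'_apply, hx]
  -- conclude
  have h1 : lam ≤ q := hq.2 lam hlam_eig
  have h2 : q ≤ lam := by
    obtain ⟨y, hy⟩ := hq.1.exists_hasEigenvector
    have hy1 : (signlessLaplacian (Snk n k)) *ᵥ y = q • y := by
      have := hy.1
      rw [Module.End.mem_eigenspace_iff, Matrix.toLin'_apply] at this
      exact this
    exact key q y hy.2 hy1
  have : q = lam := le_antisymm h2 h1
  rw [this, hlam, hs, hDdef, hp]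
end

section
/- For integers k ≥ 2 and n ≥ k + 2, the signless Laplacian spectral radius of S_{n,k} satisfies q(S_{n,k}) > n + 2k - 2 - 2k^2/n. -/
open SimpleGraph Finset

/-! The partition of `S_{n,k}` into the clique and the independent set is equitable, with
quotient matrix `[[n + k - 2, n - k], [k, k]]`; so every root `l` of its characteristic
polynomial `l ^ 2 - (n + 2k - 2) l + 2k(k - 1)` is an eigenvalue of `Q(S_{n,k})`, with an
eigenvector that is `l - k` on the clique and `k` off it. At `t = n + 2k - 2 - 2k²/n` this
polynomial takes the value `-(2k/n²)(n² + 2k(k - 1)n - 2k³) < 0`, so it has a root above `t`. -/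

open Matrix

theorem signlessLaplacian_mulVec_apply {V : Type*} [Fintype V] [DecidableEq V]
    (G : SimpleGraph V) [DecidableRel G.Adj] (x : V → ℝ) (v : V) :
    (signlessLaplacian G *ᵥ x) v = G.degree v * x v + ∑ u ∈ G.neighborFinset v, x u := by
  rw [signlessLaplacian, add_mulVec, Pi.add_apply, degMatrix_mulVec_apply,
    adjMatrix_mulVec_apply]

section Snk

variable {n k : ℕ}

theorem Snk_neighborFinset_of_lt {v : Fin n} (hv : (v : ℕ) < k) :
    (Snk n k).neighborFinset v = univ.erase v := by
  ext u
  rw [mem_neighborFinset]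
  simp only [Snk, mem_erase, mem_univ, and_true]
  exact ⟨fun h => h.1.symm, fun h => ⟨h.symm, Or.inl hv⟩⟩

theorem Snk_neighborFinset_of_not_lt {v : Fin n} (hv : ¬(v : ℕ) < k) :
    (Snk n k).neighborFinset v = ({u | (u : ℕ) < k} : Finset (Fin n)) := by
  ext u
  rw [mem_neighborFinset]
  simp only [Snk, mem_filter, mem_univ, true_and]
  exact ⟨fun h => h.2.resolve_left hv, fun h => ⟨fun e => hv (e ▸ h), Or.inr h⟩⟩

variable (n k) in
def SnkEigenvector (l : ℝ) : Fin n → ℝ := fun u => if (u : ℕ) < k then l - k else k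

theorem Snk_mulVec_eigenvector (hkn : k ≤ n) {l : ℝ}
    (hl : l ^ 2 - (n + 2 * k - 2) * l + 2 * k * (k - 1) = 0) :
    signlessLaplacian (Snk n k) *ᵥ SnkEigenvector n k l = l • SnkEigenvector n k l := by
  set x := SnkEigenvector n k l
  have hx_lt (u : Fin n) (hu : (u : ℕ) < k) : x u = l - k := if_pos hu
  have hx_ge (u : Fin n) (hu : ¬(u : ℕ) < k) : x u = k := if_neg hu
  have hclique : #({u | (u : ℕ) < k} : Finset (Fin n)) = k := by
    rw [Fin.card_filter_val_lt, min_eq_right hkn]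
  have hsum_clique : ∑ u ∈ ({u | (u : ℕ) < k} : Finset (Fin n)), x u = k * (l - k) := by
    rw [sum_congr rfl fun u hu => hx_lt u (mem_filter.1 hu).2, sum_const, hclique, nsmul_eq_mul]
  ext v
  rw [signlessLaplacian_mulVec_apply, Pi.smul_apply, smul_eq_mul]
  by_cases hv : (v : ℕ) < k
  · have hsum : ∑ u, x u = k * (l - k) + (n - k) * k := by
      rw [← sum_filter_add_sum_filter_not univ (fun u : Fin n => (u : ℕ) < k), hsum_clique,
        sum_congr rfl fun u hu => hx_ge u (mem_filter.1 hu).2, sum_const,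
        filter_not, card_sdiff_of_subset (filter_subset _ _), hclique, card_univ,
        Fintype.card_fin, nsmul_eq_mul, Nat.cast_sub hkn]
    rw [degree, Snk_neighborFinset_of_lt hv, card_erase_of_mem (mem_univ v),
      sum_erase_eq_sub (mem_univ v), hsum, card_univ, Fintype.card_fin,
      Nat.cast_pred (by omega), hx_lt v hv]
    linear_combination -hl
  · rw [degree, Snk_neighborFinset_of_not_lt hv, hclique, hsum_clique, hx_ge v hv]
    ring

theorem Snk_hasEigenvalue (hk : 0 < k) (hkn : k < n) {l : ℝ}
    (hl : l ^ 2 - (n + 2 * k - 2) * l + 2 * k * (k - 1) = 0) :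
    Module.End.HasEigenvalue (toLin' (signlessLaplacian (Snk n k))) l := by
  refine Module.End.hasEigenvalue_of_hasEigenvector (x := SnkEigenvector n k l) ⟨?_, ?_⟩
  · rw [Module.End.mem_eigenspace_iff, toLin'_apply, Snk_mulVec_eigenvector hkn.le hl]
  · intro h
    have hxk := congrFun h ⟨k, hkn⟩
    simp only [SnkEigenvector, lt_irrefl, if_false, Pi.zero_apply, Nat.cast_eq_zero] at hxk
    omega

end Snk

theorem exists_root_gt_of_quadratic_neg {s c t : ℝ} (ht : t ^ 2 - s * t + c < 0) :
    ∃ l, t < l ∧ l ^ 2 - s * l + c = 0 := by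
  have hlt : (2 * t - s) ^ 2 < s ^ 2 - 4 * c := by linarith
  have hr := Real.sq_sqrt ((sq_nonneg _).trans hlt.le)
  refine ⟨(s + √(s ^ 2 - 4 * c)) / 2, ?_, ?_⟩
  · linarith [Real.lt_sqrt_of_sq_lt hlt]
  · linear_combination hr / 4

theorem quadratic_neg_at_bound {n k : ℝ} (hk : 2 ≤ k) (hn : k + 2 ≤ n) :
    (n + 2 * k - 2 - 2 * k ^ 2 / n) ^ 2 - (n + 2 * k - 2) * (n + 2 * k - 2 - 2 * k ^ 2 / n)
      + 2 * k * (k - 1) < 0 := by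
  have hn0 : 0 < n := by linarith
  have hpos : 0 < n ^ 2 + 2 * k * (k - 1) * n - 2 * k ^ 3 := by
    nlinarith [mul_le_mul_of_nonneg_left hn (by nlinarith : (0 : ℝ) ≤ 2 * k * (k - 1))]
  have hvalue : (n + 2 * k - 2 - 2 * k ^ 2 / n) ^ 2 - (n + 2 * k - 2) * (n + 2 * k - 2 - 2 * k ^ 2 / n)
      + 2 * k * (k - 1) = -(2 * k / n ^ 2) * (n ^ 2 + 2 * k * (k - 1) * n - 2 * k ^ 3) := by
    field_simp
    ring
  rw [hvalue]
  exact mul_neg_of_neg_of_pos (neg_neg_of_pos (by positivity)) hpos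

theorem stmt_1 (k n : ℕ) (hk : 2 ≤ k) (hn : k + 2 ≤ n) (q : ℝ)
    (hq : IsMaxEigenvalue (signlessLaplacian (Snk n k)) q) :
    q > (n : ℝ) + 2 * k - 2 - 2 * (k : ℝ) ^ 2 / n := by
  obtain ⟨l, hlt, hl⟩ := exists_root_gt_of_quadratic_neg
    (quadratic_neg_at_bound (n := n) (k := k) (by exact_mod_cast hk) (by exact_mod_cast hn))
  exact hlt.trans_le (hq.2 l (Snk_hasEigenvalue (by omega) (by omega) hl))
end

section
/- If T is a tree on 2k + 2 vertices and G is a simple graph on n vertices that does not contain T as a subgraph, then the number of edges of G is at most 2kn. -/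
open SimpleGraph Finset

/-!
Put `d = 2k`, so that `T` has `d + 2` vertices. If `G` has more than `d · |G|` edges, either some
vertex has degree at most `d`, and deleting it leaves a smaller graph that still has more than
`d` times as many edges as vertices, or every vertex has degree at least `d + 1 = |T| - 1`. In
the latter case `T` embeds greedily: embed `T` minus a leaf, then send the leaf to a neighbour of
its parent's image that is not yet used; one exists because the image of the other `|T| - 2`
vertices of `T - leaf` cannot cover all `|T| - 1` neighbours.
-/

theorem containsSub_iff_isContained {α β : Type*} {T : SimpleGraph α} {G : SimpleGraph β} :
    ContainsSub T G ↔ T ⊑ G :=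
  ⟨fun ⟨f, hf⟩ => ⟨f.toCopy hf⟩, fun ⟨f⟩ => ⟨f.toHom, f.injective⟩⟩

namespace SimpleGraph

variable {α β γ : Type*} {T : SimpleGraph α} {G : SimpleGraph β}

variable (G) in
theorem exists_adj_notMem_range [Fintype γ] [G.LocallyFinite] (f : γ → β) (c : γ)
    (h : Fintype.card γ ≤ G.degree (f c)) : ∃ b, G.Adj (f c) b ∧ b ∉ Set.range f := by
  classical
  by_contra! hrange
  have hsub : G.neighborFinset (f c) ⊆ (univ.image f).erase (f c) := fun b hb => by
    rw [mem_neighborFinset] at hb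
    obtain ⟨a, rfl⟩ := hrange b hb
    exact mem_erase.2 ⟨hb.ne', mem_image_of_mem f (mem_univ a)⟩
  have hle := card_le_card hsub
  rw [card_neighborFinset_eq_degree, card_erase_of_mem (mem_image_of_mem f (mem_univ c))] at hle
  have himage : #(univ.image f) ≤ Fintype.card γ := card_image_le.trans_eq (card_univ)
  have hpos : 0 < Fintype.card γ := Fintype.card_pos_iff.2 ⟨c⟩
  omega

theorem isContained_of_extend_leaf {v : α} {u : ({v}ᶜ : Set α)} (hv : ∀ w, T.Adj v w ↔ w = u)
    (f : Copy (T.induce {v}ᶜ) G) {b : β} (hub : G.Adj (f u) b) (hb : b ∉ Set.range f) :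
    T ⊑ G := by
  classical
  let g : α → β := fun x => if hx : x = v then b else f ⟨x, hx⟩
  have hadj : ∀ {x y}, T.Adj x y → G.Adj (g x) (g y) := by
    intro x y hxy
    by_cases hx : x = v <;> by_cases hy : y = v
    · exact (hxy.ne (hx.trans hy.symm)).elim
    · subst hx
      obtain rfl : ⟨y, hy⟩ = u := Subtype.ext ((hv y).1 hxy)
      simpa [g, hy] using hub.symm
    · subst hy
      obtain rfl : ⟨x, hx⟩ = u := Subtype.ext ((hv x).1 hxy.symm)
      simpa [g, hx] using hub
    · simpa [g, hx, hy] using f.toHom.map_adj (show (T.induce {v}ᶜ).Adj ⟨x, hx⟩ ⟨y, hy⟩ from hxy)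
  refine ⟨⟨⟨g, hadj⟩, fun x y hxy => ?_⟩⟩
  by_cases hx : x = v <;> by_cases hy : y = v
  · exact hx.trans hy.symm
  · exact absurd ⟨_, by simpa [g, hx, hy] using hxy.symm⟩ hb
  · exact absurd ⟨_, by simpa [g, hx, hy] using hxy⟩ hb
  · exact congrArg Subtype.val (f.injective (by simpa [g, hx, hy] using hxy))

theorem IsTree.isContained_of_le_degree [Fintype α] (hT : T.IsTree) [G.LocallyFinite] [Nonempty β]
    (hdeg : ∀ w, Fintype.card α - 1 ≤ G.degree w) : T ⊑ G := by
  classical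
  induction hn : Fintype.card α generalizing α with
  | zero =>
    have := Fintype.card_eq_zero_iff.1 hn
    exact IsContained.of_isEmpty
  | succ n ih =>
    rcases subsingleton_or_nontrivial α with hα | hα
    · exact ⟨⟨⟨fun _ => Classical.arbitrary β, fun {x y} hxy => (hxy.ne (Subsingleton.elim x y)).elim⟩,
        fun x y _ => Subsingleton.elim x y⟩⟩
    obtain ⟨v, hv⟩ := hT.exists_vert_degree_one_of_nontrivial
    obtain ⟨u, hvu, hu⟩ := degree_eq_one_iff_existsUnique_adj.1 hv
    have hcard : Fintype.card ({v}ᶜ : Set α) = n := by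
      rw [Fintype.card_compl_set, Set.card_singleton, hn, Nat.add_sub_cancel]
    have hT' : (T.induce {v}ᶜ).IsTree :=
      ⟨hT.connected.induce_compl_singleton_of_degree_eq_one hv, hT.isAcyclic.induce _⟩
    obtain ⟨f⟩ := ih hT' (fun w => by have := hdeg w; omega) hcard
    let u' : ({v}ᶜ : Set α) := ⟨u, hvu.ne'⟩
    obtain ⟨b, hub, hb⟩ := G.exists_adj_notMem_range f u' (by rw [hcard]; have := hdeg (f u'); omega)
    exact isContained_of_extend_leaf (u := u') (fun w => ⟨hu w, fun h => h ▸ hvu⟩) f hub hb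

theorem IsTree.isContained_of_mul_card_lt_card_edgeFinset [Fintype α] [Fintype β] [DecidableEq β]
    [DecidableRel G.Adj] (hT : T.IsTree) {d : ℕ} (hd : Fintype.card α ≤ d + 2)
    (h : d * Fintype.card β < #G.edgeFinset) : T ⊑ G := by
  induction hn : Fintype.card β generalizing β with
  | zero =>
    have := G.card_edgeFinset_le_card_choose_two
    rw [hn] at h this
    have : Nat.choose 0 2 = 0 := rfl
    omega
  | succ n ih =>
    by_cases hlow : ∃ x, G.degree x ≤ d
    · obtain ⟨x, hx⟩ := hlow
      have hcard : Fintype.card ({x}ᶜ : Set β) = n := by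
        rw [Fintype.card_compl_set, Set.card_singleton, hn, Nat.add_sub_cancel]
      have hdense : d * Fintype.card ({x}ᶜ : Set β) < #(G.induce {x}ᶜ).edgeFinset := by
        rw [hcard, card_edgeFinset_induce_compl_singleton, card_edgeFinset_deleteIncidenceSet]
        rw [hn, mul_add_one] at h
        omega
      exact (ih hdense hcard).trans (Copy.induce G _).isContained
    · simp only [not_exists, not_le] at hlow
      have : Nonempty β := Fintype.card_pos_iff.1 (by omega)
      exact hT.isContained_of_le_degree fun w => by have := hlow w; omega

end SimpleGraph

theorem stmt_4_general (k n : ℕ) {α β : Type*} [Fintype α] [Fintype β] [DecidableEq β]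
    (T : SimpleGraph α) (hT : T.IsTree) (hcard : Fintype.card α = 2 * k + 2)
    (G : SimpleGraph β) [DecidableRel G.Adj] (hn : Fintype.card β = n)
    (hfree : ¬ ContainsSub T G) :
    G.edgeFinset.card ≤ 2 * k * n := by
  by_contra! hdense
  subst hn
  exact hfree <| containsSub_iff_isContained.2 <|
    hT.isContained_of_mul_card_lt_card_edgeFinset hcard.le hdense

theorem stmt_4 (k n : ℕ) (hk : 0 < k) {α β : Type*} [Fintype α] [Fintype β] [DecidableEq β]
    (T : SimpleGraph α) (hT : T.IsTree) (hcard : Fintype.card α = 2 * k + 2)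
    (G : SimpleGraph β) [DecidableRel G.Adj] (hn : Fintype.card β = n)
    (hfree : ¬ ContainsSub T G) :
    G.edgeFinset.card ≤ 2 * k * n :=
  stmt_4_general k n T hT hcard G hn hfree
end

section
/- For every positive integer k, the graph K_{k,2k+1}^+ := the join of an empty graph on k vertices with the disjoint union of 2k - 1 isolated vertices and one edge K_2, contains every tree on 2k + 2 vertices as a subgraph. -/
open SimpleGraph Finset

/-- The join `G ∨ H` of two graphs: all edges between the two vertex sets are added. -/
def graphJoin {α β : Type*} (G : SimpleGraph α) (H : SimpleGraph β) :
    SimpleGraph (α ⊕ β) where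
  Adj u v := match u, v with
    | Sum.inl a, Sum.inl b => G.Adj a b
    | Sum.inr a, Sum.inr b => H.Adj a b
    | _, _ => True
  symm := by constructor; rintro (a | a) (b | b) h <;> first | exact h.symm | trivial
  loopless := by constructor; rintro (a | a) h
                 · exact G.loopless.irrefl a h
                 · exact H.loopless.irrefl a h

/-- `(2k-1)K_1 ∪ K_2` on `2k+1` vertices: the only edge joins the last two vertices. -/
def oneEdgeGraph (k : ℕ) : SimpleGraph (Fin (2 * k + 1)) where
  Adj a b := a ≠ b ∧ 2 * k - 1 ≤ a.val ∧ 2 * k - 1 ≤ b.val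
  symm := ⟨fun a b ⟨h1, h2, h3⟩ => ⟨h1.symm, h3, h2⟩⟩
  loopless := ⟨fun a ⟨h, _⟩ => h rfl⟩

lemma tree_adj_dist {α : Type*} {T : SimpleGraph α} (hT : T.IsTree) (r : α) {u v : α}
    (h : T.Adj u v) : T.dist u r + 1 = T.dist v r ∨ T.dist v r + 1 = T.dist u r := by
  have hc := hT.isConnected
  have h1 : T.dist v r ≤ T.dist u r + 1 := by
    calc T.dist v r ≤ T.dist v u + T.dist u r := hc.dist_triangle
    _ = 1 + T.dist u r := by rw [dist_eq_one_iff_adj.mpr h.symm]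
    _ = T.dist u r + 1 := by omega
  have h2 : T.dist u r ≤ T.dist v r + 1 := by
    calc T.dist u r ≤ T.dist u v + T.dist v r := hc.dist_triangle
    _ = 1 + T.dist v r := by rw [dist_eq_one_iff_adj.mpr h]
    _ = T.dist v r + 1 := by omega
  have hne : T.dist u r ≠ T.dist v r := by
    intro heq
    obtain ⟨p, hp, hpl⟩ := hc.exists_path_of_dist u r
    have hv : v ∉ p.support := by
      intro hv
      obtain ⟨q, q', hpq⟩ := SimpleGraph.Walk.mem_support_iff_exists_append.mp hv
      have hlen : q.length + q'.length = p.length := by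
        rw [hpq, SimpleGraph.Walk.length_append]
      have hq1 : 1 ≤ q.length := by
        rcases Nat.eq_zero_or_pos q.length with h0 | h0
        · exact absurd (SimpleGraph.Walk.eq_of_length_eq_zero h0) h.ne
        · exact h0
      have hd : T.dist v r ≤ q'.length := SimpleGraph.dist_le q'
      omega
    have hp2 : (SimpleGraph.Walk.cons h.symm p).IsPath := hp.cons hv
    obtain ⟨q0, hq0, hql⟩ := hc.exists_path_of_dist v r
    obtain ⟨w, _, huniq⟩ := hT.existsUnique_path v r
    have heq2 : SimpleGraph.Walk.cons h.symm p = q0 :=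
      (huniq _ hp2).trans (huniq _ hq0).symm
    have := congrArg SimpleGraph.Walk.length heq2
    simp [SimpleGraph.Walk.length_cons, hpl, hql] at this
    omega
  omega

lemma exists_adj' {α : Type*} [Fintype α] {T : SimpleGraph α} (hc : T.Connected)
    (hcard : 1 < Fintype.card α) (v : α) : ∃ w, T.Adj v w := by
  obtain ⟨w, hw⟩ := Fintype.exists_ne_of_one_lt_card hcard v
  obtain ⟨p⟩ := hc.preconnected v w
  cases p with
  | nil => exact absurd rfl hw
  | cons h' p' => exact ⟨_, h'⟩

lemma aux_embed' (k : ℕ) (hk : 0 < k) {α : Type*} [Fintype α] [DecidableEq α]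
    (T : SimpleGraph α) [DecidableRel T.Adj] (hT : T.IsTree)
    (hcard : Fintype.card α = 2 * k + 2) (s : Finset α)
    (hadj : ∀ u v, T.Adj u v → (u ∈ s ↔ v ∉ s))
    (hs : s.card ≤ k + 1) :
    ContainsSub T (graphJoin (⊥ : SimpleGraph (Fin k)) (oneEdgeGraph k)) := by
  have hconn := hT.isConnected
  have hone : ∀ u v, T.Adj u v → (u ∈ s ∧ v ∉ s) ∨ (v ∈ s ∧ u ∉ s) := by
    intro u v h
    by_cases hu : u ∈ s
    · exact Or.inl ⟨hu, (hadj u v h).mp hu⟩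
    · have hv : v ∈ s := by
        by_contra hv
        exact hu ((hadj u v h).mpr hv)
      exact Or.inr ⟨hv, (hadj v u h.symm).mp hv⟩
  have hne : Nonempty α := Fintype.card_pos_iff.mp (by omega)
  have hexadj : ∀ v, ∃ w, T.Adj v w := exists_adj' hconn (by omega)
  have hsne : 1 ≤ s.card := by
    obtain ⟨w, hw⟩ := hexadj (Classical.arbitrary α)
    rcases hone _ _ hw with ⟨h1, _⟩ | ⟨h1, _⟩ <;>
      exact Finset.card_pos.mpr ⟨_, h1⟩
  have htcard : sᶜ.card = 2 * k + 2 - s.card := by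
    rw [Finset.card_compl, hcard]
  rcases Nat.lt_or_ge s.card (k + 1) with hlt | hge
  · -- Case A : s.card ≤ k
    have h1 : Fintype.card ↥s ≤ Fintype.card (Fin k) := by
      rw [Fintype.card_coe, Fintype.card_fin]; omega
    obtain ⟨e1⟩ := Function.Embedding.nonempty_of_card_le h1
    have h2 : Fintype.card ↥(sᶜ) ≤ Fintype.card (Fin (2 * k + 1)) := by
      rw [Fintype.card_coe, Fintype.card_fin]; omega
    obtain ⟨e2⟩ := Function.Embedding.nonempty_of_card_le h2
    let f : α → Fin k ⊕ Fin (2 * k + 1) := fun v =>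
      if h : v ∈ s then Sum.inl (e1 ⟨v, h⟩)
      else Sum.inr (e2 ⟨v, Finset.mem_compl.mpr h⟩)
    have hfs : ∀ v (h : v ∈ s), f v = Sum.inl (e1 ⟨v, h⟩) := fun v h => dif_pos h
    have hfns : ∀ v (h : v ∉ s), f v = Sum.inr (e2 ⟨v, Finset.mem_compl.mpr h⟩) :=
      fun v h => dif_neg h
    refine ⟨⟨f, ?_⟩, ?_⟩
    · intro a b hab
      rcases hone a b hab with ⟨ha, hb⟩ | ⟨hb, ha⟩
      · rw [hfs a ha, hfns b hb]; trivial
      · rw [hfns a ha, hfs b hb]; trivial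
    · intro a b heq
      have heq' : f a = f b := heq
      by_cases ha : a ∈ s <;> by_cases hb : b ∈ s
      · rw [hfs a ha, hfs b hb] at heq'
        exact congrArg Subtype.val (e1.injective (Sum.inl_injective heq'))
      · rw [hfs a ha, hfns b hb] at heq'; simp at heq'
      · rw [hfns a ha, hfs b hb] at heq'; simp at heq'
      · rw [hfns a ha, hfns b hb] at heq'
        exact congrArg Subtype.val (e2.injective (Sum.inr_injective heq'))
  · -- Case B : s.card = k+1
    have hscard : s.card = k + 1 := le_antisymm hs hge
    have htc : sᶜ.card = k + 1 := by omega
    -- find a vertex of degree ≤ 1 in s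
    have hdeg : ∃ v0 ∈ s, T.degree v0 ≤ 1 := by
      by_contra hcon
      push_neg at hcon
      have hdisj : ∀ x ∈ s, ∀ y ∈ s, x ≠ y →
          Disjoint (T.incidenceFinset x) (T.incidenceFinset y) := by
        intro x hx y hy hxy
        rw [Finset.disjoint_left]
        intro e hex hey
        rw [mem_incidenceFinset] at hex hey
        have hmem : x ∈ e ∧ y ∈ e := ⟨hex.2, hey.2⟩
        have he : e = s(x, y) := (Sym2.mem_and_mem_iff hxy).mp hmem
        have hadjxy : T.Adj x y := by
          have := hex.1
          rw [he, mem_edgeSet] at this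
          exact this
        rcases hone x y hadjxy with ⟨_, h2⟩ | ⟨_, h2⟩
        · exact h2 hy
        · exact h2 hx
      have hsum : (s.biUnion fun v => T.incidenceFinset v).card
          = ∑ v ∈ s, T.degree v := by
        rw [Finset.card_biUnion hdisj]
        exact Finset.sum_congr rfl fun v _ => by rw [card_incidenceFinset_eq_degree]
      have hsub : (s.biUnion fun v => T.incidenceFinset v) ⊆ T.edgeFinset := by
        intro e he
        obtain ⟨v, _, hev⟩ := Finset.mem_biUnion.mp he
        rw [mem_incidenceFinset] at hev
        exact mem_edgeFinset.mpr hev.1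
      have h3 : T.edgeFinset.card = 2 * k + 1 := by
        have := hT.card_edgeFinset
        rw [hcard] at this
        omega
      have h4 : 2 * (k + 1) ≤ ∑ v ∈ s, T.degree v := by
        calc 2 * (k + 1) = ∑ _v ∈ s, 2 := by rw [Finset.sum_const, hscard]; ring
        _ ≤ ∑ v ∈ s, T.degree v := Finset.sum_le_sum fun v hv => hcon v hv
      have h5 := Finset.card_le_card hsub
      omega
    obtain ⟨v0, hv0s, hv0d⟩ := hdeg
    have hv0d1 : T.degree v0 = 1 := by
      have : 0 < T.degree v0 := (T.degree_pos_iff_exists_adj v0).mpr (hexadj v0)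
      omega
    obtain ⟨u0, hn⟩ := Finset.card_eq_one.mp hv0d1
    have hu0adj : T.Adj v0 u0 := by
      have : u0 ∈ T.neighborFinset v0 := by rw [hn]; exact Finset.mem_singleton_self u0
      exact (T.mem_neighborFinset v0 u0).mp this
    have huniq : ∀ w, T.Adj v0 w → w = u0 := by
      intro w hw
      have : w ∈ T.neighborFinset v0 := (T.mem_neighborFinset v0 w).mpr hw
      rw [hn] at this
      exact Finset.mem_singleton.mp this
    have hu0t : u0 ∉ s := (hadj v0 u0 hu0adj).mp hv0s
    have hu0ne : u0 ≠ v0 := hu0adj.ne'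
    -- embeddings
    have hc1 : Fintype.card ↥(s.erase v0) ≤ Fintype.card (Fin k) := by
      rw [Fintype.card_coe, Fintype.card_fin, Finset.card_erase_of_mem hv0s]; omega
    obtain ⟨e1⟩ := Function.Embedding.nonempty_of_card_le hc1
    have hc2 : Fintype.card ↥(sᶜ.erase u0) ≤ Fintype.card (Fin (2 * k - 1)) := by
      rw [Fintype.card_coe, Fintype.card_fin,
        Finset.card_erase_of_mem (Finset.mem_compl.mpr hu0t)]
      omega
    obtain ⟨e2⟩ := Function.Embedding.nonempty_of_card_le hc2
    let f : α → Fin k ⊕ Fin (2 * k + 1) := fun v =>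
      if h0 : v = v0 then Sum.inr ⟨2 * k, by omega⟩
      else if h1 : v = u0 then Sum.inr ⟨2 * k - 1, by omega⟩
      else if h2 : v ∈ s then Sum.inl (e1 ⟨v, Finset.mem_erase.mpr ⟨h0, h2⟩⟩)
      else Sum.inr (Fin.castLE (by omega)
        (e2 ⟨v, Finset.mem_erase.mpr ⟨h1, Finset.mem_compl.mpr h2⟩⟩))
    have hf1 : f v0 = Sum.inr ⟨2 * k, by omega⟩ := dif_pos rfl
    have hf2 : f u0 = Sum.inr ⟨2 * k - 1, by omega⟩ :=
      (dif_neg hu0ne).trans (dif_pos rfl)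
    have hf3 : ∀ v (h0 : v ≠ v0) (h2 : v ∈ s),
        f v = Sum.inl (e1 ⟨v, Finset.mem_erase.mpr ⟨h0, h2⟩⟩) := by
      intro v h0 h2
      have h1 : v ≠ u0 := fun he => hu0t (he ▸ h2)
      show (if h0 : v = v0 then _ else _) = _
      rw [dif_neg h0, dif_neg h1, dif_pos h2]
    have hf4 : ∀ v (h1 : v ≠ u0) (h2 : v ∉ s),
        f v = Sum.inr (Fin.castLE (by omega)
          (e2 ⟨v, Finset.mem_erase.mpr ⟨h1, Finset.mem_compl.mpr h2⟩⟩)) := by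
      intro v h1 h2
      have h0 : v ≠ v0 := fun he => h2 (he ▸ hv0s)
      show (if h0 : v = v0 then _ else _) = _
      rw [dif_neg h0, dif_neg h1, dif_neg h2]
    have hedge : ∀ a b, T.Adj a b → a ∈ s → b ∉ s →
        (graphJoin (⊥ : SimpleGraph (Fin k)) (oneEdgeGraph k)).Adj (f a) (f b) := by
      intro a b hab has hbs
      by_cases hav : a = v0
      · subst hav
        have hbu : b = u0 := huniq b hab
        subst hbu
        rw [hf1, hf2]
        show (⟨2 * k, by omega⟩ : Fin (2 * k + 1)) ≠ ⟨2 * k - 1, by omega⟩ ∧ 2 * k - 1 ≤ 2 * k ∧ 2 * k - 1 ≤ 2 * k - 1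
        refine ⟨?_, ?_, ?_⟩ <;> simp [Fin.ext_iff] <;> omega
      · rw [hf3 a hav has]
        have hbv : b ≠ v0 := fun he => hbs (he ▸ hv0s)
        by_cases hbu : b = u0
        · subst hbu; rw [hf2]; trivial
        · rw [hf4 b hbu hbs]; trivial
    refine ⟨⟨f, ?_⟩, ?_⟩
    · intro a b hab
      rcases hone a b hab with ⟨has, hbs⟩ | ⟨hbs, has⟩
      · exact hedge a b hab has hbs
      · exact (hedge b a hab.symm hbs has).symm
    · intro a b heq
      have heq' : f a = f b := heq
      have hclass : ∀ x : α, x = v0 ∨ x = u0 ∨ (x ≠ v0 ∧ x ≠ u0 ∧ x ∈ s)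
          ∨ (x ≠ v0 ∧ x ≠ u0 ∧ x ∉ s) := by
        intro x
        by_cases h0 : x = v0
        · exact Or.inl h0
        by_cases h1 : x = u0
        · exact Or.inr (Or.inl h1)
        by_cases h2 : x ∈ s
        · exact Or.inr (Or.inr (Or.inl ⟨h0, h1, h2⟩))
        · exact Or.inr (Or.inr (Or.inr ⟨h0, h1, h2⟩))
      rcases hclass a with ha | ha | ⟨ha0, ha1, ha2⟩ | ⟨ha0, ha1, ha2⟩ <;>
        rcases hclass b with hb | hb | ⟨hb0, hb1, hb2⟩ | ⟨hb0, hb1, hb2⟩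
      · rw [ha, hb]
      · rw [ha, hb, hf1, hf2] at heq'; simp [Fin.ext_iff] at heq'; omega
      · rw [ha, hf1, hf3 b hb0 hb2] at heq'; simp at heq'
      · rw [ha, hf1, hf4 b hb1 hb2] at heq'
        simp only [Sum.inr.injEq, Fin.ext_iff, Fin.coe_castLE] at heq'
        omega
      · rw [ha, hb, hf2, hf1] at heq'; simp [Fin.ext_iff] at heq'; omega
      · rw [ha, hb]
      · rw [ha, hf2, hf3 b hb0 hb2] at heq'; simp at heq'
      · rw [ha, hf2, hf4 b hb1 hb2] at heq'
        simp only [Sum.inr.injEq, Fin.ext_iff, Fin.coe_castLE] at heq'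
        omega
      · rw [hb, hf1, hf3 a ha0 ha2] at heq'; simp at heq'
      · rw [hb, hf2, hf3 a ha0 ha2] at heq'; simp at heq'
      · rw [hf3 a ha0 ha2, hf3 b hb0 hb2] at heq'
        exact congrArg Subtype.val (e1.injective (Sum.inl_injective heq'))
      · rw [hf3 a ha0 ha2, hf4 b hb1 hb2] at heq'; simp at heq'
      · rw [hb, hf1, hf4 a ha1 ha2] at heq'
        simp only [Sum.inr.injEq, Fin.ext_iff, Fin.coe_castLE] at heq'
        omega
      · rw [hb, hf2, hf4 a ha1 ha2] at heq'
        simp only [Sum.inr.injEq, Fin.ext_iff, Fin.coe_castLE] at heq'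
        omega
      · rw [hf3 b hb0 hb2, hf4 a ha1 ha2] at heq'; simp at heq'
      · rw [hf4 a ha1 ha2, hf4 b hb1 hb2] at heq'
        have h := Sum.inr_injective heq'
        rw [Fin.castLE_inj] at h
        exact congrArg Subtype.val (e2.injective h)

theorem stmt_7 (k : ℕ) (hk : 0 < k) {α : Type*} [Fintype α]
    (T : SimpleGraph α) (hT : T.IsTree) (hcard : Fintype.card α = 2 * k + 2) :
    ContainsSub T (graphJoin (⊥ : SimpleGraph (Fin k)) (oneEdgeGraph k)) := by
  classical
  have hne : Nonempty α := Fintype.card_pos_iff.mp (by omega)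
  obtain ⟨r⟩ := hne
  have hpar : ∀ u v, T.Adj u v → (T.dist u r % 2 = 0 ↔ ¬ (T.dist v r % 2 = 0)) := by
    intro u v h
    rcases tree_adj_dist hT r h with h1 | h1 <;> omega
  set s0 : Finset α := Finset.univ.filter (fun v => T.dist v r % 2 = 0) with hs0
  have hmem : ∀ v, v ∈ s0 ↔ T.dist v r % 2 = 0 := by
    intro v; simp [hs0]
  by_cases hle : s0.card ≤ k + 1
  · refine aux_embed' k hk T hT hcard s0 ?_ hle
    intro u v h
    simp only [hmem]
    exact hpar u v h
  · set s1 : Finset α := Finset.univ.filter (fun v => ¬ T.dist v r % 2 = 0) with hs1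
    have hmem1 : ∀ v, v ∈ s1 ↔ ¬ T.dist v r % 2 = 0 := by
      intro v; simp [hs1]
    have hsum : s0.card + s1.card = Fintype.card α :=
      Finset.card_filter_add_card_filter_not _
    refine aux_embed' k hk T hT hcard s1 ?_ (by omega)
    intro u v h
    simp only [hmem1]
    have := hpar u v h
    tauto
end

section
/- Let G be a simple graph on n vertices with e(G) ≤ (2k+1)n, signless Laplacian spectral radius q ≥ n, and let x be a nonnegative eigenvector of Q(G) for q with maximum entry 1. For α > 0, let L = {v : x_v ≥ α}. Then |L| ≤ (8k+4)/α. -/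
open SimpleGraph Finset

theorem stmt_13 (k n : ℕ) (hk : 0 < k) {V : Type*} [Fintype V] [DecidableEq V]
    (G : SimpleGraph V) [DecidableRel G.Adj] (hn : Fintype.card V = n)
    (he : G.edgeFinset.card ≤ (2 * k + 1) * n)
    (q : ℝ) (hqn : (n : ℝ) ≤ q) (hq : IsMaxEigenvalue (signlessLaplacian G) q)
    (x : V → ℝ) (hx0 : ∀ v, 0 ≤ x v) (hx1 : ∀ v, x v ≤ 1) (z : V) (hz : x z = 1)
    (hx : Matrix.mulVec (signlessLaplacian G) x = q • x) (α : ℝ) (hα : 0 < α) :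
    ((Finset.univ.filter fun v => α ≤ x v).card : ℝ) ≤ (8 * k + 4) / α := by
  classical
  set L := Finset.univ.filter fun v => α ≤ x v with hL
  have hS0 : (0:ℝ) ≤ ∑ v, x v := Finset.sum_nonneg fun v _ => hx0 v
  have hn1 : 1 ≤ n := by
    rw [← hn]; exact Fintype.card_pos_iff.mpr ⟨z⟩
  have hq0 : (0:ℝ) < q := lt_of_lt_of_le (by exact_mod_cast hn1) hqn
  -- sum of the eigenvector equation over all vertices
  have h1 : ∑ v, Matrix.mulVec (signlessLaplacian G) x v = q * ∑ v, x v := by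
    rw [hx]; simp [Finset.mul_sum]
  have h2 : ∑ v, Matrix.mulVec (signlessLaplacian G) x v
      = ∑ v, ((G.degree v : ℝ) * x v) + ∑ v, ∑ u ∈ G.neighborFinset v, x u := by
    simp_rw [signlessLaplacian, Matrix.add_mulVec, Pi.add_apply,
      SimpleGraph.degMatrix_mulVec_apply, SimpleGraph.adjMatrix_mulVec_apply,
      Finset.sum_add_distrib]
  have h3 : ∑ v, ∑ u ∈ G.neighborFinset v, x u = ∑ u, ((G.degree u : ℝ) * x u) := by
    have : ∀ v : V, ∑ u ∈ G.neighborFinset v, x u = ∑ u : V, if G.Adj v u then x u else 0 := by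
      intro v
      rw [SimpleGraph.neighborFinset_eq_filter, Finset.sum_filter]
    simp_rw [this]
    rw [Finset.sum_comm]
    congr 1
    ext u
    have : ∑ v : V, (if G.Adj v u then x u else 0)
        = ∑ v ∈ G.neighborFinset u, x u := by
      rw [SimpleGraph.neighborFinset_eq_filter, Finset.sum_filter]
      congr 1; ext v
      simp [SimpleGraph.adj_comm]
    rw [this, Finset.sum_const, SimpleGraph.card_neighborFinset_eq_degree]
    simp [mul_comm]
  have hdeg : ∑ v, ((G.degree v : ℝ) * x v) ≤ ∑ v, (G.degree v : ℝ) := by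
    apply Finset.sum_le_sum
    intro v _
    calc (G.degree v : ℝ) * x v ≤ (G.degree v : ℝ) * 1 :=
          mul_le_mul_of_nonneg_left (hx1 v) (by positivity)
      _ = _ := mul_one _
  have hsumdeg : ∑ v, ((G.degree v : ℝ)) = 2 * G.edgeFinset.card := by
    rw [← Nat.cast_sum, SimpleGraph.sum_degrees_eq_twice_card_edges G]
    push_cast; ring
  have hmain : q * ∑ v, x v ≤ ((8 * k + 4 : ℕ) : ℝ) * n := by
    rw [← h1, h2, h3]
    calc ∑ v, ((G.degree v : ℝ) * x v) + ∑ u, ((G.degree u : ℝ) * x u)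
        ≤ (2 * G.edgeFinset.card : ℝ) + (2 * G.edgeFinset.card : ℝ) := by
          rw [← hsumdeg]; exact add_le_add hdeg hdeg
      _ = 4 * (G.edgeFinset.card : ℝ) := by ring
      _ ≤ 4 * (((2 * k + 1) * n : ℕ) : ℝ) := by
          apply mul_le_mul_of_nonneg_left _ (by norm_num)
          exact_mod_cast he
      _ = ((8 * k + 4 : ℕ) : ℝ) * n := by push_cast; ring
  have hS : ∑ v, x v ≤ ((8 * k + 4 : ℕ) : ℝ) := by
    have h4 : q * ∑ v, x v ≤ ((8 * k + 4 : ℕ) : ℝ) * q := by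
      refine hmain.trans ?_
      exact mul_le_mul_of_nonneg_left hqn (by positivity)
    nlinarith
  have hcard : α * (L.card : ℝ) ≤ ∑ v, x v := by
    calc α * (L.card : ℝ) = (L.card : ℝ) * α := mul_comm _ _
      _ ≤ ∑ v ∈ L, x v := by
          have := Finset.card_nsmul_le_sum L x α (fun v hv => (Finset.mem_filter.mp hv).2)
          simpa [nsmul_eq_mul] using this
      _ ≤ ∑ v, x v := Finset.sum_le_sum_of_subset_of_nonneg (Finset.subset_univ _)
          (fun v _ _ => hx0 v)
  rw [le_div_iff₀ hα]
  calc (L.card : ℝ) * α = α * L.card := mul_comm _ _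
    _ ≤ ∑ v, x v := hcard
    _ ≤ ((8 * k + 4 : ℕ) : ℝ) := hS
    _ = 8 * k + 4 := by push_cast; ring
end

section
/- Let G be a simple graph on n vertices containing k + 1 distinct vertices each of degree at least (1 - 1/(2k))n, with k ≥ 1 and (k+1)(1 - 1/(2k))n - kn ≥ 2k + 2. Then G contains every tree on 2k + 3 vertices as a subgraph. -/
open SimpleGraph Finset

/-
Let `S` be the common neighbourhood of `v 0, …, v k`. Each `v i` misses at most
`n - (1 - 1/(2k)) n` vertices, so `|S| ≥ (k+1)(1 - 1/(2k)) n - k n ≥ 2k + 2`, and `G` contains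
the complete bipartite graph between `{v i}` and `S`, a copy of `K_{k+1, 2k+2}`. A tree on
`2k + 3` vertices is bipartite with a nonempty smaller side of size at most `k + 1`, so its
larger side has at most `2k + 2` vertices and the two sides map injectively into the two sides
of that `K_{k+1, 2k+2}`.
-/

namespace SimpleGraph

variable {α V : Type*}

theorem card_add_sum_degree_le_card_add [Fintype V] [DecidableEq V]
    (G : SimpleGraph V) [DecidableRel G.Adj] {ι : Type*} [Fintype ι] (v : ι → V)
    (S : Finset V) (hS : ∀ w, (∀ i, G.Adj (v i) w) → w ∈ S) :
    Fintype.card V + ∑ i, G.degree (v i) ≤ #S + Fintype.card ι * Fintype.card V := by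
  have hcover : (univ : Finset V) ⊆ S ∪ univ.biUnion fun i => (G.neighborFinset (v i))ᶜ := by
    intro w _
    by_cases hw : ∀ i, G.Adj (v i) w
    · exact mem_union_left _ (hS w hw)
    · simpa using Or.inr (not_forall.1 hw)
  have hcompl (i : ι) : #(G.neighborFinset (v i))ᶜ + G.degree (v i) = Fintype.card V := by
    rw [card_compl, card_neighborFinset_eq_degree]
    have := G.degree_lt_card_verts (v i)
    omega
  calc Fintype.card V + ∑ i, G.degree (v i)
      ≤ #S + ∑ i, #(G.neighborFinset (v i))ᶜ + ∑ i, G.degree (v i) := by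
        gcongr
        calc Fintype.card V = #(univ : Finset V) := card_univ.symm
          _ ≤ _ := card_le_card hcover
          _ ≤ _ := card_union_le _ _
          _ ≤ _ := by gcongr; exact card_biUnion_le
    _ = #S + Fintype.card ι * Fintype.card V := by
        rw [add_assoc, ← sum_add_distrib]
        simp [hcompl]

theorem IsTree.exists_bipartition [Fintype α] [Nontrivial α] {T : SimpleGraph α}
    (hT : T.IsTree) :
    ∃ s : Finset α, 0 < #s ∧ 2 * #s ≤ Fintype.card α ∧
      ∀ ⦃x y⦄, T.Adj x y → (x ∈ s ↔ y ∉ s) := by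
  let C := hT.coloringTwo
  obtain ⟨i, hi⟩ : ∃ i, #{a | C a = i} < Fintype.card α / 2 + 1 :=
    Fintype.exists_card_fiber_lt_of_card_lt_mul (by simp; omega) (f := C)
  have hcross ⦃x y : α⦄ (h : T.Adj x y) : C x = i ↔ C y ≠ i := by
    have hFin2 : ∀ a b j : Fin 2, a ≠ b → (a = j ↔ b ≠ j) := by decide
    exact hFin2 _ _ _ (C.valid h)
  refine ⟨({a | C a = i} : Finset α), ?_, by omega, fun x y h => by simpa using hcross h⟩
  obtain ⟨x, y, hxy⟩ : ∃ x y, T.Adj x y :=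
    ⟨_, hT.connected.preconnected.exists_adj_of_nontrivial (Classical.arbitrary α)⟩
  refine card_pos.2 ?_
  by_cases hx : C x = i
  · exact ⟨x, by simpa using hx⟩
  · exact ⟨y, by simpa using not_not.1 (mt (hcross hxy).2 hx)⟩

theorem containsSub_of_forall_adj [Fintype α] [DecidableEq α] {T : SimpleGraph α}
    {G : SimpleGraph V} (s : Finset α) (hs : ∀ ⦃x y⦄, T.Adj x y → (x ∈ s ↔ y ∉ s))
    (X Y : Finset V) (hXY : ∀ x ∈ X, ∀ y ∈ Y, G.Adj x y) (hX : #s ≤ #X)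
    (hY : #sᶜ ≤ #Y) : ContainsSub T G := by
  obtain ⟨g⟩ : Nonempty (s ↪ X) := Function.Embedding.nonempty_of_card_le (by simpa using hX)
  obtain ⟨e⟩ : Nonempty ((sᶜ : Finset α) ↪ Y) :=
    Function.Embedding.nonempty_of_card_le (by simpa only [Fintype.card_coe] using hY)
  let f (a : α) : V := if h : a ∈ s then g ⟨a, h⟩ else e ⟨a, mem_compl.2 h⟩
  have hXY' (a : s) (b : (sᶜ : Finset α)) : G.Adj (g a) (e b) := hXY _ (g a).2 _ (e b).2
  have hf : Function.Injective f := by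
    intro x y hxy
    by_cases hx : x ∈ s <;> by_cases hy : y ∈ s <;>
      simp only [f, hx, hy, dite_true, dite_false] at hxy
    · simpa using g.injective (Subtype.ext hxy)
    · exact absurd (hxy ▸ hXY' _ _) G.irrefl
    · exact absurd (hxy ▸ (hXY' _ _).symm) G.irrefl
    · simpa using e.injective (Subtype.ext hxy)
  refine ⟨⟨f, fun {x y} hxy => ?_⟩, hf⟩
  by_cases hx : x ∈ s
  · simpa [f, hx, (hs hxy).1 hx] using hXY' _ _
  · have hy : y ∈ s := by simpa [hx] using (hs hxy).not
    simpa [f, hx, hy] using (hXY' _ _).symm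

end SimpleGraph

theorem stmt_15_general (k n : ℕ)
    {V : Type*} [Fintype V] [DecidableEq V] (G : SimpleGraph V) [DecidableRel G.Adj]
    (hcard : Fintype.card V = n) (v : Fin (k + 1) → V) (hinj : Function.Injective v)
    (hdeg : ∀ i, ((1 : ℝ) - 1 / (2 * k)) * n ≤ (G.degree (v i) : ℝ))
    (hbig : (2 * (k : ℝ) + 2) ≤ ((k : ℝ) + 1) * (1 - 1 / (2 * k)) * n - k * n)
    {α : Type*} [Fintype α] (T : SimpleGraph α) (hT : T.IsTree)
    (hTcard : Fintype.card α = 2 * k + 3) :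
    ContainsSub T G := by
  classical
  set S : Finset V := {w | ∀ i, G.Adj (v i) w}
  have hS : 2 * k + 2 ≤ #S := by
    have hcount : n + ∑ i, G.degree (v i) ≤ #S + (k + 1) * n := by
      have := G.card_add_sum_degree_le_card_add v S fun w hw => by simpa [S] using hw
      rwa [hcard, Fintype.card_fin] at this
    have hsum : ((k : ℝ) + 1) * ((1 - 1 / (2 * k)) * n) ≤ ∑ i, (G.degree (v i) : ℝ) := by
      simpa using card_nsmul_le_sum univ _ _ fun i _ => hdeg i
    have hcount' : (n : ℝ) + ∑ i, (G.degree (v i) : ℝ) ≤ #S + (k + 1) * n := by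
      exact_mod_cast hcount
    have : (2 * k + 2 : ℝ) ≤ #S := by linarith
    exact_mod_cast this
  have : Nontrivial α := Fintype.one_lt_card_iff_nontrivial.1 (by omega)
  obtain ⟨s, hs_pos, hs_half, hs_cross⟩ := hT.exists_bipartition
  refine containsSub_of_forall_adj s hs_cross (univ.map ⟨v, hinj⟩) S
    (fun x hx y hy => ?_) (by simp; omega) (by rw [card_compl]; omega)
  obtain ⟨i, -, rfl⟩ := mem_map.1 hx
  exact (mem_filter.1 hy).2 i

theorem stmt_15 (k n : ℕ) (hk : 1 ≤ k)
    {V : Type*} [Fintype V] [DecidableEq V] (G : SimpleGraph V) [DecidableRel G.Adj]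
    (hcard : Fintype.card V = n) (v : Fin (k + 1) → V) (hinj : Function.Injective v)
    (hdeg : ∀ i, ((1 : ℝ) - 1 / (2 * k)) * n ≤ (G.degree (v i) : ℝ))
    (hbig : (2 * (k : ℝ) + 2) ≤ ((k : ℝ) + 1) * (1 - 1 / (2 * k)) * n - k * n)
    {α : Type*} [Fintype α] (T : SimpleGraph α) (hT : T.IsTree)
    (hTcard : Fintype.card α = 2 * k + 3) :
    ContainsSub T G :=
  stmt_15_general k n G hcard v hinj hdeg hbig T hT hTcard
end
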